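/- Let A be an abelian ℓ-group and let g, f ∈ A be such that every minimal prime ideal p of A satisfies: g ∈ p if and only if f ∉ p. Then g^⊥⊥ = f^⊥, and consequently the principal polar f^⊥⊥ is the complement of g^⊥⊥ in the lattice of principal polars of A. -/

import Mathlib

/-- The absolute value `|g| = (g ⊔ 0) + ((-g) ⊔ 0)` in a lattice-ordered abelian group. -/
def absl {A : Type*} [Lattice A] [AddCommGroup A] (g : A) : A :=
  (g ⊔ 0) + (-g ⊔ 0)

/-- The polar `T^⊥ = {x : |x| ⊓ |t| = 0 for all t ∈ T}`. -/
def polar {A : Type*} [Lattice A] [AddCommGroup A] (T : Set A) : Set A :=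
  {x : A | ∀ t ∈ T, absl x ⊓ absl t = 0}

/-- An ideal of an abelian ℓ-group: an order-convex sublattice subgroup. -/
structure IsIdeal {A : Type*} [Lattice A] [AddCommGroup A] (I : Set A) : Prop where
  zero_mem : (0 : A) ∈ I
  add_mem : ∀ ⦃a b : A⦄, a ∈ I → b ∈ I → a + b ∈ I
  neg_mem : ∀ ⦃a : A⦄, a ∈ I → -a ∈ I
  sup_mem : ∀ ⦃a b : A⦄, a ∈ I → b ∈ I → a ⊔ b ∈ I
  inf_mem : ∀ ⦃a b : A⦄, a ∈ I → b ∈ I → a ⊓ b ∈ I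
  convex : ∀ ⦃a b c : A⦄, a ∈ I → c ∈ I → a ≤ b → b ≤ c → b ∈ I

/-- A prime ideal: a proper ideal such that `a ⊓ b = 0` implies `a ∈ p` or `b ∈ p`. -/
def IsPrimeIdeal {A : Type*} [Lattice A] [AddCommGroup A] (p : Set A) : Prop :=
  IsIdeal p ∧ p ≠ Set.univ ∧ ∀ a b : A, a ⊓ b = 0 → a ∈ p ∨ b ∈ p

/-- A minimal prime ideal: a prime ideal containing no strictly smaller prime ideal. -/
def IsMinimalPrimeLIdeal {A : Type*} [Lattice A] [AddCommGroup A] (p : Set A) : Prop :=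
  IsPrimeIdeal p ∧ ∀ q : Set A, IsPrimeIdeal q → q ⊆ p → q = p


/-!
For a maximal filter `U` of the positive cone of an abelian ℓ-group, `p = ⋃_{u ∈ U} u^⊥` is a
minimal prime ideal. It avoids any given nonzero element `c` if `U` is chosen through `|c|`, and
every member of `p` is disjoint from some non-member of `p`, namely from some `u ∈ U`.

Now let `x ∈ g^⊥⊥` with `|x| ⊓ |f| ≠ 0`, and take such a `p` avoiding `|x| ⊓ |f|`. Then `f ∉ p`,
so `g ∈ p`, so `g` is disjoint from some `u ∉ p`; then `u ∈ g^⊥`, so `|x| ⊓ |u| = 0` with neither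
`x` nor `u` in `p`, contradicting primeness. Conversely, if `x ∈ f^⊥` and `y ∈ g^⊥` were not
disjoint, a minimal prime avoiding `|x| ⊓ |y|` would contain `g` (as `y` is disjoint from `g`)
and `f` (as `x` is disjoint from `f`). Once `g^⊥⊥ = f^⊥`, the complement statement is polar
calculus.
-/

open LatticeOrderedAddCommGroup

section LatticeOrderedGroup

variable {A : Type*} [Lattice A] [AddCommGroup A] [AddLeftMono A]

theorem absl_eq_abs (x : A) : absl x = |x| := by
  rw [← posPart_add_negPart x, posPart_def, negPart_def, absl]

theorem eq_zero_of_abs_eq_zero {x : A} (h : |x| = 0) : x = 0 :=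
  le_antisymm (h ▸ le_abs_self x) (neg_nonpos.1 (h ▸ neg_le_abs x))

theorem add_inf_le_inf_add_inf {a b c : A} (ha : 0 ≤ a) (hb : 0 ≤ b) (hc : 0 ≤ c) :
    (a + b) ⊓ c ≤ a ⊓ c + b ⊓ c := by
  rw [inf_add, add_inf, add_inf]
  refine le_inf (le_inf inf_le_left ?_) (le_inf ?_ ?_)
  · exact inf_le_right.trans (le_add_of_nonneg_left ha)
  · exact inf_le_right.trans (le_add_of_nonneg_right hb)
  · exact inf_le_right.trans (le_add_of_nonneg_right hc)

theorem abs_sup_le_abs_add_abs (a b : A) : |a ⊔ b| ≤ |a| + |b| := by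
  refine abs_le'.2 ⟨sup_le ?_ ?_, ?_⟩
  · exact (le_abs_self a).trans (le_add_of_nonneg_right (abs_nonneg b))
  · exact (le_abs_self b).trans (le_add_of_nonneg_left (abs_nonneg a))
  · rw [neg_sup]
    exact inf_le_left.trans ((neg_le_abs a).trans (le_add_of_nonneg_right (abs_nonneg b)))

theorem abs_inf_le_abs_add_abs (a b : A) : |a ⊓ b| ≤ |a| + |b| := by
  simpa only [← neg_inf, abs_neg] using abs_sup_le_abs_add_abs (-a) (-b)

theorem abs_le_abs_add_abs_of_le_of_le {a b c : A} (hab : a ≤ b) (hbc : b ≤ c) :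
    |b| ≤ |a| + |c| := by
  refine abs_le'.2 ⟨?_, ?_⟩
  · exact hbc.trans ((le_abs_self c).trans (le_add_of_nonneg_left (abs_nonneg a)))
  · exact (neg_le_neg_iff.2 hab).trans ((neg_le_abs a).trans (le_add_of_nonneg_right (abs_nonneg c)))

end LatticeOrderedGroup

section Ideals

variable {A : Type*} [Lattice A] [AddCommGroup A] [AddLeftMono A]

namespace IsIdeal

variable {I : Set A}

theorem of_isSolid (zero_mem : (0 : A) ∈ I) (add_mem : ∀ ⦃a b : A⦄, a ∈ I → b ∈ I → a + b ∈ I)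
    (hI : IsSolid I) : IsIdeal I := by
  have mem_of_le_add : ∀ ⦃a b x : A⦄, a ∈ I → b ∈ I → |x| ≤ |a| + |b| → x ∈ I :=
    fun a b x ha hb h ↦ hI (add_mem (hI ha (abs_abs a).le) (hI hb (abs_abs b).le))
      (h.trans_eq (abs_of_nonneg ((abs_nonneg a).trans (le_add_of_nonneg_right (abs_nonneg b)))).symm)
  refine ⟨zero_mem, add_mem, fun a ha ↦ hI ha (abs_neg a).le, ?_, ?_, ?_⟩
  · exact fun a b ha hb ↦ mem_of_le_add ha hb (abs_sup_le_abs_add_abs a b)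
  · exact fun a b ha hb ↦ mem_of_le_add ha hb (abs_inf_le_abs_add_abs a b)
  · exact fun a b c ha hc hab hbc ↦ mem_of_le_add ha hc (abs_le_abs_add_abs_of_le_of_le hab hbc)

variable (hI : IsIdeal I)
include hI

theorem abs_mem_iff {x : A} : |x| ∈ I ↔ x ∈ I :=
  ⟨fun h ↦ hI.convex (hI.neg_mem h) h (neg_le.1 (neg_le_abs x)) (le_abs_self x),
    fun h ↦ hI.sup_mem h (hI.neg_mem h)⟩

theorem isSolid : IsSolid I := fun _ hy x hxy ↦
  hI.abs_mem_iff.1 (hI.convex hI.zero_mem (hI.abs_mem_iff.2 hy) (abs_nonneg x) hxy)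

theorem abs_inf_abs_mem_of_mem_left {x : A} (y : A) (hx : x ∈ I) : |x| ⊓ |y| ∈ I :=
  hI.isSolid hx <| (abs_of_nonneg (le_inf (abs_nonneg x) (abs_nonneg y))).trans_le inf_le_left

theorem abs_inf_abs_mem_of_mem_right (x : A) {y : A} (hy : y ∈ I) : |x| ⊓ |y| ∈ I :=
  inf_comm |y| |x| ▸ hI.abs_inf_abs_mem_of_mem_left x hy

end IsIdeal

theorem IsPrimeIdeal.mem_or_mem_of_abs_inf_abs_eq_zero {p : Set A} (hp : IsPrimeIdeal p)
    {a b : A} (hab : |a| ⊓ |b| = 0) : a ∈ p ∨ b ∈ p :=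
  (hp.2.2 _ _ hab).imp hp.1.abs_mem_iff.1 hp.1.abs_mem_iff.1

end Ideals

structure IsPosFilter {A : Type*} [Lattice A] [Zero A] (D : Set A) : Prop where
  nonempty : D.Nonempty
  zero_notMem : (0 : A) ∉ D
  nonneg : ∀ ⦃d : A⦄, d ∈ D → 0 ≤ d
  inf_mem : ∀ ⦃a b : A⦄, a ∈ D → b ∈ D → a ⊓ b ∈ D
  mem_of_le : ∀ ⦃a b : A⦄, a ∈ D → a ≤ b → b ∈ D

/-- The union of the polars `u^⊥`, `u ∈ D`. -/
def filterPolar {A : Type*} [Lattice A] [AddGroup A] (D : Set A) : Set A :=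
  {x | ∃ u ∈ D, |x| ⊓ u = 0}

namespace IsPosFilter

section Order

variable {A : Type*} [Lattice A] [Zero A] {D U : Set A}

theorem inf_ne_zero (hD : IsPosFilter D) {a b : A} (ha : a ∈ D) (hb : b ∈ D) : a ⊓ b ≠ 0 :=
  fun h ↦ hD.zero_notMem (h ▸ hD.inf_mem ha hb)

theorem sUnion_of_isChain {c : Set (Set A)} (hc : ∀ D ∈ c, IsPosFilter D)
    (hchain : IsChain (· ⊆ ·) c) (hne : c.Nonempty) : IsPosFilter (⋃₀ c) := by
  obtain ⟨D, hD⟩ := hne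
  refine ⟨(hc D hD).nonempty.mono (Set.subset_sUnion_of_mem hD), ?_, ?_, ?_, ?_⟩
  · rintro ⟨E, hE, h0⟩
    exact (hc E hE).zero_notMem h0
  · rintro d ⟨E, hE, hd⟩
    exact (hc E hE).nonneg hd
  · rintro a b ⟨E₁, hE₁, ha⟩ ⟨E₂, hE₂, hb⟩
    rcases hchain.total hE₁ hE₂ with h | h
    · exact ⟨E₂, hE₂, (hc E₂ hE₂).inf_mem (h ha) hb⟩
    · exact ⟨E₁, hE₁, (hc E₁ hE₁).inf_mem ha (h hb)⟩
  · rintro a b ⟨E, hE, ha⟩ hab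
    exact ⟨E, hE, (hc E hE).mem_of_le ha hab⟩

theorem exists_maximal (hD : IsPosFilter D) : ∃ U, D ⊆ U ∧ Maximal IsPosFilter U :=
  zorn_subset_nonempty {E | IsPosFilter E}
    (fun c hc hchain hne ↦ ⟨⋃₀ c, sUnion_of_isChain hc hchain hne,
      fun _ ↦ Set.subset_sUnion_of_mem⟩) D hD

/-- The filter generated by `U` and `a` is proper, so it is `U` itself. -/
theorem mem_of_maximal (hU : Maximal IsPosFilter U) {a : A} (ha : 0 ≤ a)
    (hmeet : ∀ u ∈ U, a ⊓ u ≠ 0) : a ∈ U := by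
  set V : Set A := {z | ∃ u ∈ U, a ⊓ u ≤ z}
  have hV : IsPosFilter V := by
    obtain ⟨u₀, hu₀⟩ := hU.1.nonempty
    refine ⟨⟨a ⊓ u₀, u₀, hu₀, le_rfl⟩, ?_, ?_, ?_, ?_⟩
    · rintro ⟨u, hu, h0⟩
      exact hmeet u hu (le_antisymm h0 (le_inf ha (hU.1.nonneg hu)))
    · rintro z ⟨u, hu, hz⟩
      exact (le_inf ha (hU.1.nonneg hu)).trans hz
    · rintro z₁ z₂ ⟨u₁, hu₁, h₁⟩ ⟨u₂, hu₂, h₂⟩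
      refine ⟨u₁ ⊓ u₂, hU.1.inf_mem hu₁ hu₂, le_inf ?_ ?_⟩
      · exact (inf_le_inf_left a inf_le_left).trans h₁
      · exact (inf_le_inf_left a inf_le_right).trans h₂
    · rintro z w ⟨u, hu, hz⟩ hzw
      exact ⟨u, hu, hz.trans hzw⟩
  obtain ⟨u₀, hu₀⟩ := hU.1.nonempty
  exact hU.2 hV (fun u hu ↦ ⟨u, hu, inf_le_right⟩) ⟨u₀, hu₀, inf_le_left⟩

end Order

variable {A : Type*} [Lattice A] [AddCommGroup A] {D U : Set A}

theorem notMem_filterPolar_of_abs_mem (hD : IsPosFilter D) {x : A} (hx : |x| ∈ D) :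
    x ∉ filterPolar D :=
  fun ⟨_, hu, h0⟩ ↦ hD.inf_ne_zero hx hu h0

variable [AddLeftMono A]

theorem notMem_filterPolar (hD : IsPosFilter D) {u : A} (hu : u ∈ D) : u ∉ filterPolar D :=
  hD.notMem_filterPolar_of_abs_mem (by rwa [abs_of_nonneg (hD.nonneg hu)])

theorem isIdeal_filterPolar (hD : IsPosFilter D) : IsIdeal (filterPolar D) := by
  refine IsIdeal.of_isSolid ?_ ?_ ?_
  · obtain ⟨u, hu⟩ := hD.nonempty
    exact ⟨u, hu, by rw [abs_zero, inf_eq_left.2 (hD.nonneg hu)]⟩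
  · rintro a b ⟨u, hu, hau⟩ ⟨v, hv, hbv⟩
    refine ⟨u ⊓ v, hD.inf_mem hu hv, le_antisymm ?_ ?_⟩
    · calc |a + b| ⊓ (u ⊓ v) ≤ (|a| + |b|) ⊓ (u ⊓ v) := inf_le_inf_right _ (abs_add_le a b)
        _ ≤ |a| ⊓ (u ⊓ v) + |b| ⊓ (u ⊓ v) :=
          add_inf_le_inf_add_inf (abs_nonneg a) (abs_nonneg b) (hD.nonneg (hD.inf_mem hu hv))
        _ ≤ |a| ⊓ u + |b| ⊓ v :=
          add_le_add (inf_le_inf_left _ inf_le_left) (inf_le_inf_left _ inf_le_right)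
        _ = 0 := by rw [hau, hbv, add_zero]
    · exact le_inf (abs_nonneg _) (hD.nonneg (hD.inf_mem hu hv))
  · rintro y ⟨u, hu, hyu⟩ x hxy
    exact ⟨u, hu, le_antisymm (hyu ▸ inf_le_inf_right u hxy)
      (le_inf (abs_nonneg x) (hD.nonneg hu))⟩

theorem isPrimeIdeal_filterPolar (hU : Maximal IsPosFilter U) :
    IsPrimeIdeal (filterPolar U) := by
  refine ⟨hU.1.isIdeal_filterPolar, ?_, fun a b hab ↦ ?_⟩
  · obtain ⟨u, hu⟩ := hU.1.nonempty
    exact fun h ↦ hU.1.notMem_filterPolar hu (h ▸ Set.mem_univ u)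
  · have ha : 0 ≤ a := hab ▸ inf_le_left
    have hb : 0 ≤ b := hab ▸ inf_le_right
    by_cases haU : a ∈ filterPolar U
    · exact Or.inl haU
    · have haU' : a ∈ U := mem_of_maximal hU ha fun u hu h ↦
        haU ⟨u, hu, by rw [abs_of_nonneg ha, h]⟩
      exact Or.inr ⟨a, haU', by rw [abs_of_nonneg hb, inf_comm, hab]⟩

/-- A prime `q ⊆ filterPolar U` contains each `x` with `|x| ⊓ u = 0`, `u ∈ U`, since `u ∉ q`. -/
theorem isMinimalPrimeLIdeal_filterPolar (hU : Maximal IsPosFilter U) :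
    IsMinimalPrimeLIdeal (filterPolar U) := by
  refine ⟨isPrimeIdeal_filterPolar hU, fun q hq hqU ↦ hqU.antisymm ?_⟩
  rintro x ⟨u, hu, hxu⟩
  rcases hq.2.2 _ _ hxu with hx | hu'
  · exact hq.1.abs_mem_iff.1 hx
  · exact absurd (hqU hu') (hU.1.notMem_filterPolar hu)

end IsPosFilter

section Polars

variable {A : Type*} [Lattice A] [AddCommGroup A] [AddLeftMono A]

theorem exists_isMinimalPrimeLIdeal_notMem {c : A} (hc : c ≠ 0) :
    ∃ p, IsMinimalPrimeLIdeal p ∧ c ∉ p ∧ ∀ a ∈ p, ∃ u ∉ p, |a| ⊓ |u| = 0 := by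
  have hD : IsPosFilter (Set.Ici |c|) :=
    { nonempty := Set.nonempty_Ici
      zero_notMem := fun h ↦ hc (eq_zero_of_abs_eq_zero (le_antisymm h (abs_nonneg c)))
      nonneg := fun _ hd ↦ (abs_nonneg c).trans hd
      inf_mem := fun _ _ ha hb ↦ le_inf ha hb
      mem_of_le := fun _ _ ha hab ↦ le_trans ha hab }
  obtain ⟨U, hcU, hU⟩ := hD.exists_maximal
  refine ⟨filterPolar U, IsPosFilter.isMinimalPrimeLIdeal_filterPolar hU,
    hU.1.notMem_filterPolar_of_abs_mem (hcU le_rfl), ?_⟩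
  rintro a ⟨u, hu, hau⟩
  exact ⟨u, hU.1.notMem_filterPolar hu, by rwa [abs_of_nonneg (hU.1.nonneg hu)]⟩

theorem mem_polar_iff {T : Set A} {x : A} : x ∈ polar T ↔ ∀ t ∈ T, |x| ⊓ |t| = 0 := by
  simp only [polar, absl_eq_abs, Set.mem_ofPred_eq]

theorem mem_polar_singleton {x t : A} : x ∈ polar {t} ↔ |x| ⊓ |t| = 0 := by
  simp only [mem_polar_iff, Set.mem_singleton_iff, forall_eq]

theorem polar_subset_polar {S T : Set A} (h : S ⊆ T) : polar T ⊆ polar S :=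
  fun _ hx ↦ mem_polar_iff.2 fun t ht ↦ mem_polar_iff.1 hx t (h ht)

theorem subset_polar_polar (T : Set A) : T ⊆ polar (polar T) :=
  fun t ht ↦ mem_polar_iff.2 fun x hx ↦ inf_comm |x| |t| ▸ mem_polar_iff.1 hx t ht

theorem zero_mem_polar (T : Set A) : (0 : A) ∈ polar T :=
  mem_polar_iff.2 fun t _ ↦ by rw [abs_zero, inf_eq_left.2 (abs_nonneg t)]

theorem eq_zero_of_mem_of_mem_polar {T : Set A} {x : A} (hx : x ∈ T) (hx' : x ∈ polar T) :
    x = 0 :=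
  eq_zero_of_abs_eq_zero (inf_idem |x| ▸ mem_polar_iff.1 hx' x hx)

theorem inter_polar_eq_singleton_zero {T : Set A} (h0 : (0 : A) ∈ T) : T ∩ polar T = {0} :=
  Set.eq_singleton_iff_unique_mem.2
    ⟨⟨h0, zero_mem_polar T⟩, fun _ hx ↦ eq_zero_of_mem_of_mem_polar hx.1 hx.2⟩

theorem polar_eq_univ {T : Set A} (hT : T ⊆ {0}) : polar T = Set.univ :=
  Set.eq_univ_of_forall fun x ↦ mem_polar_iff.2 fun t ht ↦ by
    rw [hT ht, abs_zero, inf_eq_right.2 (abs_nonneg x)]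

theorem polar_polar_singleton_subset {g f : A}
    (h : ∀ p : Set A, IsMinimalPrimeLIdeal p → f ∉ p → g ∈ p) :
    polar (polar {g}) ⊆ polar {f} := by
  intro x hx
  rw [mem_polar_singleton]
  by_contra hxf
  obtain ⟨p, hp, hxfp, hdisj⟩ := exists_isMinimalPrimeLIdeal_notMem hxf
  have hfp : f ∉ p := fun hf ↦ hxfp (hp.1.1.abs_inf_abs_mem_of_mem_right x hf)
  obtain ⟨u, hup, hgu⟩ := hdisj g (h p hp hfp)
  have hu : u ∈ polar {g} := mem_polar_singleton.2 (inf_comm |u| |g| ▸ hgu)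
  rcases hp.1.mem_or_mem_of_abs_inf_abs_eq_zero (mem_polar_iff.1 hx u hu) with hxp | hup'
  · exact hxfp (hp.1.1.abs_inf_abs_mem_of_mem_left f hxp)
  · exact hup hup'

theorem polar_singleton_subset {g f : A}
    (h : ∀ p : Set A, IsMinimalPrimeLIdeal p → g ∈ p → f ∉ p) :
    polar {f} ⊆ polar (polar {g}) := by
  intro x hx
  refine mem_polar_iff.2 fun y hy ↦ ?_
  by_contra hxy
  obtain ⟨p, hp, hxyp, -⟩ := exists_isMinimalPrimeLIdeal_notMem hxy
  have hyp : y ∉ p := fun hy' ↦ hxyp (hp.1.1.abs_inf_abs_mem_of_mem_right x hy')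
  have hgp : g ∈ p :=
    (hp.1.mem_or_mem_of_abs_inf_abs_eq_zero (mem_polar_singleton.1 hy)).resolve_left hyp
  rcases hp.1.mem_or_mem_of_abs_inf_abs_eq_zero (mem_polar_singleton.1 hx) with hxp | hfp
  · exact hxyp (hp.1.1.abs_inf_abs_mem_of_mem_left y hxp)
  · exact h p hp hgp hfp

end Polars

/-- If for every minimal prime ideal `p` one has `g ∈ p ↔ f ∉ p`, then `g^⊥⊥ = f^⊥`;
consequently `f^⊥⊥` is the complement of `g^⊥⊥` in the lattice of principal polars:
their meet (intersection) is the bottom polar `{0}` and their join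
`(g^⊥⊥ ∪ f^⊥⊥)^⊥⊥` is the top polar `A`. -/
theorem statement5 {A : Type*} [Lattice A] [AddCommGroup A]
    [CovariantClass A A (· + ·) (· ≤ ·)]
    (g f : A) (h : ∀ p : Set A, IsMinimalPrimeLIdeal p → (g ∈ p ↔ f ∉ p)) :
    polar (polar {g}) = polar {f} ∧
    polar (polar {g}) ∩ polar (polar {f}) = {0} ∧
    polar (polar (polar (polar {g}) ∪ polar (polar {f}))) = Set.univ := by
  have hgf : polar (polar {g}) = polar {f} :=
    (polar_polar_singleton_subset fun p hp ↦ (h p hp).2).antisymm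
      (polar_singleton_subset fun p hp ↦ (h p hp).1)
  refine ⟨hgf, ?_, polar_eq_univ ?_⟩
  · rw [hgf]
    exact inter_polar_eq_singleton_zero (zero_mem_polar {f})
  · intro t ht
    have htf : t ∈ polar {f} :=
      polar_subset_polar (subset_polar_polar {f}) (polar_subset_polar Set.subset_union_right ht)
    exact eq_zero_of_mem_of_mem_polar (Set.subset_union_left (hgf ▸ htf)) ht
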